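/- arXiv:2205.12801 — 4 statements merged into one kernel-verified Lean document; each statement's English description precedes it below -/
import Mathlib

section
/- Let ℍ be the real quaternions and let Z be a subring of ℍ that is discrete (as a subset of ℍ in the norm topology) and closed under quaternionic conjugation (star). Let (a_n)_{n≥1} be a sequence with a_n ∈ Z for all n, let x₀ ∈ ℍ, and define the forward orbit x_0 = x₀, x_{n+1} = (x_n)⁻¹ − a_{n+1}. Suppose that for every n ≥ 0 one has x_n ≠ 0 and ‖x_n‖ < 1. Then the sequence of convergents c_n = P[a_1,…,a_n]·(Q[a_1,…,a_n])⁻¹ tends to x₀ as n → ∞. -/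
open Filter

/-- `(P l, Q l)` for a digit list `l = [a_i, …, a_n]`:
`P [] = 0`, `Q [] = 1`, `P (a :: l) = Q l`, `Q (a :: l) = a * Q l + P l`. -/
def cfPQ {k : Type*} [DivisionRing k] : List k → k × k
  | [] => (0, 1)
  | a :: l => ((cfPQ l).2, a * (cfPQ l).2 + (cfPQ l).1)

/-- The digit list `[a_i, a_{i+1}, …, a_n]`. -/
def suffList {k : Type*} (a : ℕ → k) (i n : ℕ) : List k :=
  (List.range (n + 1 - i)).map (fun j => a (i + j))

/-!
Let `P_n, Q_n` be the numerator and denominator of the `n`-th convergent and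
`π_n = ‖x_0‖ ⋯ ‖x_{n-1}‖`. For every pair `(U, V)` obeying the recurrence
`U_{n+1} = U_n a_{n+1} + V_n`, `V_{n+1} = U_n`, such as `(Q_n, Q_{n-1})` or
`(P_n - x₀ Q_n, P_{n-1} - x₀ Q_{n-1})`, the quantity `U_n + V_n x_n` is multiplied on the right by
`x_n⁻¹` at each step. Hence `‖Q_n + Q_{n-1} x_n‖ = 1 / π_n`, and, the second combination starting
at `0`, `‖P_n - x₀ Q_n‖ = π_{n+1}`, so that `dist (P_n Q_n⁻¹) x₀ = π_{n+1} / ‖Q_n‖`.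

In a discrete subring every nonzero element has norm at least `1` (its powers cannot tend to `0`),
so `Q_n ≠ 0`. If the distance is at least `ε`, then `P_n, Q_n, P_{n-1}, Q_{n-1}` all have norm
`O(ε⁻²)`, so they lie in a finite subset of `Z`. But this quadruple determines `x_n`, hence `π_n`,
which is strictly decreasing in `n`. So the distance is at least `ε` for only finitely many `n`.
-/

open Topology

variable {k : Type*}

theorem suffList_one_succ (a : ℕ → k) (n : ℕ) :
    suffList a 1 (n + 1) = suffList a 1 n ++ [a (n + 1)] := by
  simp [suffList, List.range_succ, Nat.add_comm]

section Convergents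

variable [DivisionRing k]

/-- `(P, Q)` of the list without its last digit, with `(P_{-1}, Q_{-1}) = (1, 0)` for `[]`. -/
def cfPQPrev : List k → k × k
  | [] => (1, 0)
  | a :: l => ((cfPQPrev l).2, a * (cfPQPrev l).2 + (cfPQPrev l).1)

theorem cfPQ_append_singleton (l : List k) (b : k) :
    cfPQ (l ++ [b]) = ((cfPQ l).1 * b + (cfPQPrev l).1, (cfPQ l).2 * b + (cfPQPrev l).2) := by
  induction l with
  | nil => simp [cfPQ, cfPQPrev]
  | cons a l ih =>
    simp only [List.cons_append, cfPQ, cfPQPrev, ih, Prod.mk.injEq, true_and]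
    noncomm_ring

theorem cfPQPrev_append_singleton (l : List k) (b : k) : cfPQPrev (l ++ [b]) = cfPQ l := by
  induction l with
  | nil => simp [cfPQ, cfPQPrev]
  | cons a l ih => simp [cfPQ, cfPQPrev, ih]

def cfNum (a : ℕ → k) (n : ℕ) : k := (cfPQ (suffList a 1 n)).1

def cfDen (a : ℕ → k) (n : ℕ) : k := (cfPQ (suffList a 1 n)).2

def cfNumPrev (a : ℕ → k) (n : ℕ) : k := (cfPQPrev (suffList a 1 n)).1

def cfDenPrev (a : ℕ → k) (n : ℕ) : k := (cfPQPrev (suffList a 1 n)).2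

section Recurrence

variable (a : ℕ → k) (n : ℕ)

@[simp] theorem cfNum_zero : cfNum a 0 = 0 := by simp [cfNum, suffList, cfPQ]

@[simp] theorem cfDen_zero : cfDen a 0 = 1 := by simp [cfDen, suffList, cfPQ]

@[simp] theorem cfNumPrev_zero : cfNumPrev a 0 = 1 := by simp [cfNumPrev, suffList, cfPQPrev]

@[simp] theorem cfDenPrev_zero : cfDenPrev a 0 = 0 := by simp [cfDenPrev, suffList, cfPQPrev]

theorem cfNum_succ : cfNum a (n + 1) = cfNum a n * a (n + 1) + cfNumPrev a n := by
  simp [cfNum, cfNumPrev, suffList_one_succ, cfPQ_append_singleton]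

theorem cfDen_succ : cfDen a (n + 1) = cfDen a n * a (n + 1) + cfDenPrev a n := by
  simp [cfDen, cfDenPrev, suffList_one_succ, cfPQ_append_singleton]

theorem cfNumPrev_succ : cfNumPrev a (n + 1) = cfNum a n := by
  simp [cfNum, cfNumPrev, suffList_one_succ, cfPQPrev_append_singleton]

theorem cfDenPrev_succ : cfDenPrev a (n + 1) = cfDen a n := by
  simp [cfDen, cfDenPrev, suffList_one_succ, cfPQPrev_append_singleton]

end Recurrence

theorem cf_mem {Z : Subring k} {a : ℕ → k} (ha : ∀ n, 1 ≤ n → a n ∈ Z) (n : ℕ) :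
    cfNum a n ∈ Z ∧ cfDen a n ∈ Z ∧ cfNumPrev a n ∈ Z ∧ cfDenPrev a n ∈ Z := by
  induction n with
  | zero => simp [one_mem, zero_mem]
  | succ n ih =>
    obtain ⟨hP, hQ, hR, hS⟩ := ih
    have han := ha (n + 1) n.succ_pos
    rw [cfNum_succ, cfDen_succ, cfNumPrev_succ, cfDenPrev_succ]
    exact ⟨add_mem (mul_mem hP han) hR, add_mem (mul_mem hQ han) hS, hP, hQ⟩

end Convergents

section ProdNorm

variable [NormedDivisionRing k] {x : ℕ → k}

def prodNorm (x : ℕ → k) (n : ℕ) : ℝ := ∏ i ∈ Finset.range n, ‖x i‖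

@[simp] theorem prodNorm_zero : prodNorm x 0 = 1 := by simp [prodNorm]

theorem prodNorm_succ (n : ℕ) : prodNorm x (n + 1) = prodNorm x n * ‖x n‖ :=
  Finset.prod_range_succ _ _

theorem prodNorm_pos (hne : ∀ n, x n ≠ 0) (n : ℕ) : 0 < prodNorm x n :=
  Finset.prod_pos fun i _ => norm_pos_iff.mpr (hne i)

theorem prodNorm_strictAnti (hne : ∀ n, x n ≠ 0) (hlt : ∀ n, ‖x n‖ < 1) :
    StrictAnti (prodNorm x) :=
  strictAnti_nat_of_succ_lt fun n => by
    rw [prodNorm_succ]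
    exact mul_lt_of_lt_one_right (prodNorm_pos hne n) (hlt n)

theorem prodNorm_le_one (hne : ∀ n, x n ≠ 0) (hlt : ∀ n, ‖x n‖ < 1) (n : ℕ) :
    prodNorm x n ≤ 1 :=
  prodNorm_zero (x := x) ▸ (prodNorm_strictAnti hne hlt).antitone n.zero_le

end ProdNorm

structure IsCFOrbit [DivisionRing k] (a x : ℕ → k) : Prop where
  step : ∀ n, x (n + 1) = (x n)⁻¹ - a (n + 1)
  ne_zero : ∀ n, x n ≠ 0

namespace IsCFOrbit

section DivisionRing

variable [DivisionRing k] {a x : ℕ → k}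

theorem digit_add (hx : IsCFOrbit a x) (n : ℕ) : a (n + 1) + x (n + 1) = (x n)⁻¹ := by
  rw [hx.step n]
  abel

theorem add_mul_succ (hx : IsCFOrbit a x) {U V : ℕ → k}
    (hU : ∀ n, U (n + 1) = U n * a (n + 1) + V n) (hV : ∀ n, V (n + 1) = U n) (n : ℕ) :
    U (n + 1) + V (n + 1) * x (n + 1) = (U n + V n * x n) * (x n)⁻¹ := by
  rw [hU, hV, add_mul, mul_assoc, mul_inv_cancel₀ (hx.ne_zero n), mul_one, ← hx.digit_add n,
    mul_add]
  abel

theorem num_sub_add_numPrev_sub_mul_eq_zero (hx : IsCFOrbit a x) (n : ℕ) :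
    cfNum a n - x 0 * cfDen a n + (cfNumPrev a n - x 0 * cfDenPrev a n) * x n = 0 := by
  induction n with
  | zero => simp
  | succ n ih =>
    rw [hx.add_mul_succ (U := fun n => cfNum a n - x 0 * cfDen a n)
      (V := fun n => cfNumPrev a n - x 0 * cfDenPrev a n) _ _ n, ih, zero_mul]
    · intro m
      simp only [cfNum_succ, cfDen_succ]
      noncomm_ring
    · intro m
      simp only [cfNumPrev_succ, cfDenPrev_succ]

end DivisionRing

variable [NormedDivisionRing k] {a x : ℕ → k}

theorem norm_den_add_denPrev_mul (hx : IsCFOrbit a x) (n : ℕ) :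
    ‖cfDen a n + cfDenPrev a n * x n‖ = (prodNorm x n)⁻¹ := by
  induction n with
  | zero => simp
  | succ n ih =>
    rw [hx.add_mul_succ (cfDen_succ a) (cfDenPrev_succ a), norm_mul, norm_inv, ih, prodNorm_succ,
      mul_inv]

theorem norm_numPrev_sub_mul_denPrev (hx : IsCFOrbit a x) (n : ℕ) :
    ‖cfNumPrev a n - x 0 * cfDenPrev a n‖ = prodNorm x n := by
  induction n with
  | zero => simp
  | succ n ih =>
    rw [cfNumPrev_succ, cfDenPrev_succ,
      eq_neg_of_add_eq_zero_left (hx.num_sub_add_numPrev_sub_mul_eq_zero n), norm_neg, norm_mul, ih,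
      prodNorm_succ]

theorem norm_num_sub_mul_den (hx : IsCFOrbit a x) (n : ℕ) :
    ‖cfNum a n - x 0 * cfDen a n‖ = prodNorm x (n + 1) := by
  rw [← cfNumPrev_succ, ← cfDenPrev_succ, hx.norm_numPrev_sub_mul_denPrev]

theorem dist_convergent (hx : IsCFOrbit a x) {n : ℕ} (hQ : cfDen a n ≠ 0) :
    dist (cfNum a n * (cfDen a n)⁻¹) (x 0) = prodNorm x (n + 1) / ‖cfDen a n‖ := by
  have : cfNum a n * (cfDen a n)⁻¹ - x 0 = (cfNum a n - x 0 * cfDen a n) * (cfDen a n)⁻¹ := by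
    rw [sub_mul, mul_assoc, mul_inv_cancel₀ hQ, mul_one]
  rw [dist_eq_norm, this, norm_mul, norm_inv, hx.norm_num_sub_mul_den, div_eq_mul_inv]

theorem injective_cf (hx : IsCFOrbit a x) (hlt : ∀ n, ‖x n‖ < 1) :
    Function.Injective fun n => (cfNum a n, cfDen a n, cfNumPrev a n, cfDenPrev a n) := by
  intro i j hij
  simp only [Prod.mk.injEq] at hij
  obtain ⟨hP, hQ, hR, hS⟩ := hij
  have herr (n : ℕ) :
      (cfNumPrev a n - x 0 * cfDenPrev a n) * x n = -(cfNum a n - x 0 * cfDen a n) :=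
    eq_neg_of_add_eq_zero_right (hx.num_sub_add_numPrev_sub_mul_eq_zero n)
  have herrPrev_ne : cfNumPrev a i - x 0 * cfDenPrev a i ≠ 0 := by
    rw [← norm_pos_iff, hx.norm_numPrev_sub_mul_denPrev]
    exact prodNorm_pos hx.ne_zero i
  have hxij : x i = x j := mul_left_cancel₀ herrPrev_ne <| by
    rw [herr i, hP, hQ, ← herr j, hR, hS]
  have hprod : (prodNorm x i)⁻¹ = (prodNorm x j)⁻¹ := by
    rw [← hx.norm_den_add_denPrev_mul, ← hx.norm_den_add_denPrev_mul, hQ, hS, hxij]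
  exact (prodNorm_strictAnti hx.ne_zero hlt).injective (inv_inj.mp hprod)

theorem norm_cf_le (hx : IsCFOrbit a x) (hlt : ∀ n, ‖x n‖ < 1) {n : ℕ} {M : ℝ}
    (hQ : ‖cfDen a n‖ ≤ M) (hM : 1 ≤ M * prodNorm x (n + 1)) :
    ‖cfNum a n‖ ≤ 3 * M ^ 2 ∧ ‖cfDen a n‖ ≤ 3 * M ^ 2 ∧
      ‖cfNumPrev a n‖ ≤ 3 * M ^ 2 ∧ ‖cfDenPrev a n‖ ≤ 3 * M ^ 2 := by
  have hπ_pos := prodNorm_pos hx.ne_zero (n + 1)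
  have hπ_le := prodNorm_le_one hx.ne_zero hlt n
  have hπ_succ : prodNorm x (n + 1) = prodNorm x n * ‖x n‖ := prodNorm_succ n
  have hπ_anti : prodNorm x (n + 1) ≤ prodNorm x n :=
    (prodNorm_strictAnti hx.ne_zero hlt).antitone n.le_succ
  have hM_one : 1 ≤ M := by nlinarith [norm_nonneg (cfDen a n)]
  have hx₀ : ‖x 0‖ ≤ 1 := (hlt 0).le
  have hxn : 1 ≤ M * ‖x n‖ := by nlinarith [norm_nonneg (x n)]
  have hD : ‖cfDen a n + cfDenPrev a n * x n‖ ≤ M := by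
    rw [hx.norm_den_add_denPrev_mul]
    calc (prodNorm x n)⁻¹ ≤ (prodNorm x (n + 1))⁻¹ := inv_anti₀ hπ_pos hπ_anti
      _ ≤ M := (inv_le_iff_one_le_mul₀ hπ_pos).mpr hM
  have hS : ‖cfDenPrev a n‖ ≤ 2 * M ^ 2 := by
    have hSx : ‖cfDenPrev a n‖ * ‖x n‖ ≤ 2 * M := by
      have := norm_sub_le (cfDen a n + cfDenPrev a n * x n) (cfDen a n)
      rw [add_sub_cancel_left, norm_mul] at this
      linarith
    nlinarith [norm_nonneg (cfDenPrev a n)]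
  have hP : ‖cfNum a n‖ ≤ 1 + M := by
    have := norm_le_norm_sub_add (cfNum a n) (x 0 * cfDen a n)
    rw [hx.norm_num_sub_mul_den, norm_mul] at this
    nlinarith [norm_nonneg (x 0), norm_nonneg (cfDen a n), prodNorm_le_one hx.ne_zero hlt (n + 1)]
  have hR : ‖cfNumPrev a n‖ ≤ 1 + 2 * M ^ 2 := by
    have := norm_le_norm_sub_add (cfNumPrev a n) (x 0 * cfDenPrev a n)
    rw [hx.norm_numPrev_sub_mul_denPrev, norm_mul] at this
    nlinarith [norm_nonneg (x 0), norm_nonneg (cfDenPrev a n)]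
  refine ⟨?_, ?_, ?_, ?_⟩ <;> nlinarith

end IsCFOrbit

section Discrete

variable [NormedDivisionRing k]

theorem Subring.one_le_norm_of_mem {Z : Subring k} [DiscreteTopology Z] {z : k}
    (hz : z ∈ Z) (hz0 : z ≠ 0) : 1 ≤ ‖z‖ := by
  by_contra! hlt
  have hpow : Tendsto (fun m => (⟨z ^ m, pow_mem hz m⟩ : Z)) atTop (𝓝 0) :=
    tendsto_subtype_rng.mpr (tendsto_pow_atTop_nhds_zero_of_norm_lt_one hlt)
  rw [nhds_discrete, tendsto_pure] at hpow
  obtain ⟨m, hm⟩ := hpow.exists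
  exact pow_ne_zero m hz0 (congrArg Subtype.val hm)

theorem Subring.finite_closedBall_inter [ProperSpace k] (Z : Subring k) [DiscreteTopology Z]
    (r : ℝ) : (Metric.closedBall 0 r ∩ Z : Set k).Finite :=
  Metric.finite_isBounded_inter_isClosed DiscreteTopology.isDiscrete Metric.isBounded_closedBall
    (AddSubgroup.isClosed_of_discrete (H := Z.toAddSubgroup))

theorem IsCFOrbit.cfDen_ne_zero {Z : Subring k} [DiscreteTopology Z] {a x : ℕ → k}
    (ha : ∀ n, 1 ≤ n → a n ∈ Z) (hx : IsCFOrbit a x) (hlt : ∀ n, ‖x n‖ < 1) (n : ℕ) :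
    cfDen a n ≠ 0 := by
  intro hQ
  have hP := hx.norm_num_sub_mul_den n
  rw [hQ, mul_zero, sub_zero] at hP
  have hP_ne : cfNum a n ≠ 0 := by
    rw [← norm_pos_iff, hP]
    exact prodNorm_pos hx.ne_zero (n + 1)
  have := Subring.one_le_norm_of_mem (cf_mem ha n).1 hP_ne
  have := (prodNorm_strictAnti hx.ne_zero hlt) n.succ_pos
  simp only [prodNorm_zero] at this
  linarith

theorem IsCFOrbit.norm_cf_le_of_le_dist {Z : Subring k} [DiscreteTopology Z] {a x : ℕ → k}
    (ha : ∀ n, 1 ≤ n → a n ∈ Z) (hx : IsCFOrbit a x) (hlt : ∀ n, ‖x n‖ < 1) {n : ℕ} {ε : ℝ}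
    (hε : 0 < ε) (hn : ε ≤ dist (cfNum a n * (cfDen a n)⁻¹) (x 0)) :
    ‖cfNum a n‖ ≤ 3 * ε⁻¹ ^ 2 ∧ ‖cfDen a n‖ ≤ 3 * ε⁻¹ ^ 2 ∧
      ‖cfNumPrev a n‖ ≤ 3 * ε⁻¹ ^ 2 ∧ ‖cfDenPrev a n‖ ≤ 3 * ε⁻¹ ^ 2 := by
  have hQ_ne := hx.cfDen_ne_zero ha hlt n
  have hQ_one := Subring.one_le_norm_of_mem (cf_mem ha n).2.1 hQ_ne
  have hπ_le := prodNorm_le_one hx.ne_zero hlt (n + 1)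
  rw [hx.dist_convergent hQ_ne, le_div_iff₀ (by linarith)] at hn
  have hQ : ‖cfDen a n‖ ≤ ε⁻¹ := by
    rw [← one_div, le_div_iff₀ hε]
    linarith
  exact hx.norm_cf_le hlt hQ ((one_le_inv_mul₀ hε).mpr (by nlinarith))

theorem IsCFOrbit.tendsto_convergent [ProperSpace k] (Z : Subring k) [DiscreteTopology Z]
    {a x : ℕ → k} (ha : ∀ n, 1 ≤ n → a n ∈ Z) (hx : IsCFOrbit a x) (hlt : ∀ n, ‖x n‖ < 1) :
    Tendsto (fun n => cfNum a n * (cfDen a n)⁻¹) atTop (𝓝 (x 0)) := by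
  refine Metric.tendsto_nhds.mpr fun ε hε => ?_
  set T := Metric.closedBall 0 (3 * ε⁻¹ ^ 2) ∩ (Z : Set k)
  have hbad : {n | ε ≤ dist (cfNum a n * (cfDen a n)⁻¹) (x 0)} ⊆
      (fun n => (cfNum a n, cfDen a n, cfNumPrev a n, cfDenPrev a n)) ⁻¹' (T ×ˢ T ×ˢ T ×ˢ T) := by
    intro n hn
    obtain ⟨hP, hQ, hR, hS⟩ := hx.norm_cf_le_of_le_dist ha hlt hε hn
    obtain ⟨mP, mQ, mR, mS⟩ := cf_mem ha n
    exact ⟨⟨mem_closedBall_zero_iff.mpr hP, mP⟩, ⟨mem_closedBall_zero_iff.mpr hQ, mQ⟩,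
      ⟨mem_closedBall_zero_iff.mpr hR, mR⟩, ⟨mem_closedBall_zero_iff.mpr hS, mS⟩⟩
  have hT := Z.finite_closedBall_inter (3 * ε⁻¹ ^ 2)
  have hfin := ((hT.prod (hT.prod (hT.prod hT))).preimage (hx.injective_cf hlt).injOn).subset hbad
  rw [← Nat.cofinite_eq_atTop]
  filter_upwards [hfin.eventually_cofinite_notMem] with n hn
  exact not_le.mp hn

end Discrete

theorem quaternion_cf_convergence_general (Z : Subring (Quaternion ℝ))
    (hZdisc : DiscreteTopology Z)
    (a : ℕ → Quaternion ℝ) (ha : ∀ n, 1 ≤ n → a n ∈ Z)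
    (x₀ : Quaternion ℝ) (x : ℕ → Quaternion ℝ) (hx0 : x 0 = x₀)
    (hstep : ∀ n, x (n + 1) = (x n)⁻¹ - a (n + 1))
    (hne : ∀ n, x n ≠ 0) (hlt : ∀ n, ‖x n‖ < 1) :
    Tendsto (fun n => (cfPQ (suffList a 1 n)).1 * ((cfPQ (suffList a 1 n)).2)⁻¹)
      atTop (nhds x₀) :=
  hx0 ▸ IsCFOrbit.tendsto_convergent Z ha ⟨hstep, hne⟩ hlt

/-- Theorem 1.2 of the paper for `k = ℍ` (the real quaternions). -/
theorem quaternion_cf_convergence (Z : Subring (Quaternion ℝ))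
    (hZdisc : DiscreteTopology Z)
    (hZconj : ∀ z ∈ Z, star z ∈ Z)
    (a : ℕ → Quaternion ℝ) (ha : ∀ n, 1 ≤ n → a n ∈ Z)
    (x₀ : Quaternion ℝ) (x : ℕ → Quaternion ℝ) (hx0 : x 0 = x₀)
    (hstep : ∀ n, x (n + 1) = (x n)⁻¹ - a (n + 1))
    (hne : ∀ n, x n ≠ 0) (hlt : ∀ n, ‖x n‖ < 1) :
    Tendsto (fun n => (cfPQ (suffList a 1 n)).1 * ((cfPQ (suffList a 1 n)).2)⁻¹)
      atTop (nhds x₀) :=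
  quaternion_cf_convergence_general Z hZdisc a ha x₀ x hx0 hstep hne hlt
end

section
/- Let Z be a subring of ℂ that is discrete (as a subset of ℂ in the norm topology) and closed under complex conjugation. Let (a_n)_{n≥1} be a sequence with a_n ∈ Z, let x₀ ∈ ℂ, and define the forward orbit x_0 = x₀, x_{n+1} = (x_n)⁻¹ − a_{n+1}; assume x_n ≠ 0 for all n ≥ 0. Suppose: (1) for all 0 ≤ m ≤ n and every nonzero z ∈ Z, one has ∏_{i=m}^{n} ‖x_i‖ ≠ ‖z‖; and (2) the partial products ∏_{i=0}^{n} ‖x_i‖ tend to 0 as n → ∞. Then the sequence of convergents c_n = P[a_1,…,a_n]·(Q[a_1,…,a_n])⁻¹ tends to x₀ as n → ∞. -/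
open Filter

/-!
Along the orbit, writing `P_m, Q_m` for `P, Q` of `[a_{m+1},…,a_n]`, one has
`x_m Q_m - P_m = -x_m (x_{m+1} Q_{m+1} - P_{m+1})`, so `‖x₀ q_n - p_n‖ = ∏_{i ≤ n} ‖x_i‖`
for the convergent `p_n q_n⁻¹`, where `p_n, q_n ∈ Z`. If `q_n = 0`, then `p_n` would be a
nonzero element of `Z` whose norm is a window product, which (1) forbids; so `q_n ≠ 0`, and
discreteness of `Z` bounds `‖q_n‖` below by some `δ > 0`. Hence
`‖p_n q_n⁻¹ - x₀‖ ≤ δ⁻¹ ∏_{i ≤ n} ‖x_i‖ → 0` by (2).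
-/

open Finset

lemma suffList_of_lt {k : Type*} (a : ℕ → k) {i n : ℕ} (h : n < i) : suffList a i n = [] := by
  simp [suffList, Nat.sub_eq_zero_of_le (show n + 1 ≤ i by omega)]

lemma suffList_of_le {k : Type*} (a : ℕ → k) {i n : ℕ} (h : i ≤ n) :
    suffList a i n = a i :: suffList a (i + 1) n := by
  rw [suffList, show n + 1 - i = n + 1 - (i + 1) + 1 by omega, List.range_succ_eq_map]
  simp only [List.map_cons, List.map_map, suffList]
  congr 2
  funext j
  simp only [Function.comp_apply]
  congr 1
  omega

lemma exists_of_mem_suffList {k : Type*} {a : ℕ → k} {i n : ℕ} {y : k}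
    (hy : y ∈ suffList a i n) : ∃ j, i ≤ j ∧ a j = y := by
  obtain ⟨j, -, rfl⟩ := List.mem_map.1 hy
  exact ⟨i + j, Nat.le_add_right i j, rfl⟩

lemma cfPQ_mem_subring {k : Type*} [DivisionRing k] (S : Subring k) :
    ∀ l : List k, (∀ y ∈ l, y ∈ S) → (cfPQ l).1 ∈ S ∧ (cfPQ l).2 ∈ S
  | [], _ => ⟨S.zero_mem, S.one_mem⟩
  | b :: l, h => by
    obtain ⟨hP, hQ⟩ := cfPQ_mem_subring S l fun y hy => h y (List.mem_cons_of_mem b hy)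
    exact ⟨hQ, S.add_mem (S.mul_mem (h b List.mem_cons_self) hQ) hP⟩

lemma exists_pos_le_norm_of_discreteTopology {E : Type*} [SeminormedAddGroup E] (S : Set E)
    [DiscreteTopology S] (h0 : (0 : E) ∈ S) : ∃ δ > 0, ∀ z ∈ S, z ≠ 0 → δ ≤ ‖z‖ := by
  obtain ⟨δ, hδ, hS⟩ := Metric.isOpen_singleton_iff.1 (isOpen_discrete {(⟨0, h0⟩ : S)})
  refine ⟨δ, hδ, fun z hz hz0 => le_of_not_gt fun hlt => hz0 ?_⟩
  have := hS ⟨z, hz⟩ (by rwa [Subtype.dist_eq, dist_zero_right])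
  exact congrArg Subtype.val this

lemma tendsto_mul_inv_of_norm_mul_sub_le {k : Type*} [NormedDivisionRing k] {p q : ℕ → k}
    {x₀ : k} {r : ℕ → ℝ} {δ : ℝ} (hδ : 0 < δ) (hq : ∀ n, δ ≤ ‖q n‖)
    (hpq : ∀ n, ‖x₀ * q n - p n‖ ≤ r n) (hr : Tendsto r atTop (nhds 0)) :
    Tendsto (fun n => p n * (q n)⁻¹) atTop (nhds x₀) := by
  rw [tendsto_iff_norm_sub_tendsto_zero]
  have hbound : ∀ n, ‖p n * (q n)⁻¹ - x₀‖ ≤ r n * δ⁻¹ := fun n => by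
    have hq0 : q n ≠ 0 := norm_pos_iff.1 (hδ.trans_le (hq n))
    calc ‖p n * (q n)⁻¹ - x₀‖ = ‖x₀ * q n - p n‖ * ‖q n‖⁻¹ := by
          rw [← norm_inv, ← norm_mul, ← norm_neg, sub_mul, mul_inv_cancel_right₀ hq0, neg_sub]
      _ ≤ r n * δ⁻¹ :=
          mul_le_mul (hpq n) (inv_anti₀ hδ (hq n)) (by positivity) ((norm_nonneg _).trans (hpq n))
  exact squeeze_zero (fun n => norm_nonneg _) hbound (by simpa using hr.mul_const δ⁻¹)

section Orbit

variable {k : Type*} [NormedDivisionRing k] {a x : ℕ → k}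

lemma orbit_mul_cfPQ_cons_sub {m : ℕ} (hstep : x (m + 1) = (x m)⁻¹ - a (m + 1))
    (hm : x m ≠ 0) (l : List k) :
    x m * (cfPQ (a (m + 1) :: l)).2 - (cfPQ (a (m + 1) :: l)).1
      = -x m * (x (m + 1) * (cfPQ l).2 - (cfPQ l).1) := by
  simp only [cfPQ, hstep]
  rw [neg_mul, mul_sub, sub_mul, mul_sub, ← mul_assoc (x m) (x m)⁻¹, mul_inv_cancel₀ hm,
    one_mul, mul_add]
  abel

theorem norm_orbit_mul_cfQ_sub_cfP (hstep : ∀ n, x (n + 1) = (x n)⁻¹ - a (n + 1))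
    (hne : ∀ n, x n ≠ 0) {m n : ℕ} (hmn : m ≤ n) :
    ‖x m * (cfPQ (suffList a (m + 1) n)).2 - (cfPQ (suffList a (m + 1) n)).1‖
      = ∏ i ∈ Icc m n, ‖x i‖ := by
  obtain ⟨d, rfl⟩ := Nat.exists_eq_add_of_le hmn
  induction d generalizing m with
  | zero =>
    rw [suffList_of_lt a (show m + 0 < m + 1 by omega)]
    simp [cfPQ]
  | succ d ih =>
    rw [suffList_of_le a (by omega), orbit_mul_cfPQ_cons_sub (hstep m) (hne m), norm_mul, norm_neg,
      ← insert_Icc_add_one_left_eq_Icc (by omega), prod_insert (by simp),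
      show m + (d + 1) = m + 1 + d by omega, ih (Nat.le_add_right _ _)]

end Orbit

theorem complex_cf_convergence_of_transcendental_general (Z : Subring ℂ)
    (hZdisc : DiscreteTopology Z)
    (a : ℕ → ℂ) (ha : ∀ n, 1 ≤ n → a n ∈ Z)
    (x₀ : ℂ) (x : ℕ → ℂ) (hx0 : x 0 = x₀)
    (hstep : ∀ n, x (n + 1) = (x n)⁻¹ - a (n + 1))
    (hne : ∀ n, x n ≠ 0)
    (hwindow : ∀ m n : ℕ, m ≤ n → ∀ z ∈ Z, z ≠ 0 →
      ∏ i ∈ Finset.Icc m n, ‖x i‖ ≠ ‖z‖)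
    (hprod : Tendsto (fun n => ∏ i ∈ Finset.range (n + 1), ‖x i‖) atTop (nhds 0)) :
    Tendsto (fun n => (cfPQ (suffList a 1 n)).1 * ((cfPQ (suffList a 1 n)).2)⁻¹)
      atTop (nhds x₀) := by
  subst hx0
  obtain ⟨δ, hδ, hZδ⟩ := exists_pos_le_norm_of_discreteTopology (Z : Set ℂ) Z.zero_mem
  set p := fun n => (cfPQ (suffList a 1 n)).1
  set q := fun n => (cfPQ (suffList a 1 n)).2
  have hpq_mem (n : ℕ) : p n ∈ Z ∧ q n ∈ Z := cfPQ_mem_subring Z _ fun y hy => by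
    obtain ⟨j, hj, rfl⟩ := exists_of_mem_suffList hy
    exact ha j hj
  have hdist (n : ℕ) : ‖x 0 * q n - p n‖ = ∏ i ∈ Icc 0 n, ‖x i‖ :=
    norm_orbit_mul_cfQ_sub_cfP hstep hne n.zero_le
  have hq_ne (n : ℕ) : q n ≠ 0 := by
    intro hq0
    have hp : ‖p n‖ = ∏ i ∈ Icc 0 n, ‖x i‖ := by simpa [hq0] using hdist n
    have hp0 : p n ≠ 0 := norm_pos_iff.1 <| hp ▸ prod_pos fun i _ => norm_pos_iff.2 (hne i)
    exact hwindow 0 n n.zero_le (p n) (hpq_mem n).1 hp0 hp.symm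
  refine tendsto_mul_inv_of_norm_mul_sub_le hδ (fun n => hZδ _ (hpq_mem n).2 (hq_ne n))
    (fun n => (hdist n).le) ?_
  simpa only [Nat.range_succ_eq_Icc_zero] using hprod

/-- Theorem 1.4 of the paper for `k = ℂ`. -/
theorem complex_cf_convergence_of_transcendental (Z : Subring ℂ)
    (hZdisc : DiscreteTopology Z)
    (hZconj : ∀ z ∈ Z, starRingEnd ℂ z ∈ Z)
    (a : ℕ → ℂ) (ha : ∀ n, 1 ≤ n → a n ∈ Z)
    (x₀ : ℂ) (x : ℕ → ℂ) (hx0 : x 0 = x₀)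
    (hstep : ∀ n, x (n + 1) = (x n)⁻¹ - a (n + 1))
    (hne : ∀ n, x n ≠ 0)
    (hwindow : ∀ m n : ℕ, m ≤ n → ∀ z ∈ Z, z ≠ 0 →
      ∏ i ∈ Finset.Icc m n, ‖x i‖ ≠ ‖z‖)
    (hprod : Tendsto (fun n => ∏ i ∈ Finset.range (n + 1), ‖x i‖) atTop (nhds 0)) :
    Tendsto (fun n => (cfPQ (suffList a 1 n)).1 * ((cfPQ (suffList a 1 n)).2)⁻¹)
      atTop (nhds x₀) :=
  complex_cf_convergence_of_transcendental_general Z hZdisc a ha x₀ x hx0 hstep hne hwindow hprod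
end

section
/- Let k be a normed division ring, n ≥ 1, and a_1,…,a_n ∈ k. Define P and Q on suffixes by P[] = 0, Q[] = 1 for the empty list, and P[a_i,…,a_n] = Q[a_{i+1},…,a_n], Q[a_i,…,a_n] = a_i·Q[a_{i+1},…,a_n] + P[a_{i+1},…,a_n]. Suppose Q[a_i,…,a_n] ≠ 0 for every 1 ≤ i ≤ n. Then ∏_{i=0}^{n−1} ‖P[a_{i+1},…,a_n]·(Q[a_{i+1},…,a_n])⁻¹‖ = ‖Q[a_1,…,a_n]‖⁻¹. -/
/-! With `Q_j = Q[a_j, …, a_n]` (so `Q_{n+1} = 1`), the identity `P[a_j, …, a_n] = Q_{j+1}` turns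
the `i`-th factor into `‖Q_{i+2}‖ / ‖Q_{i+1}‖`, and the product telescopes to `‖Q_{n+1}‖ / ‖Q_1‖`. -/

theorem Finset.prod_range_div_mul_of_ne_zero {G : Type*} [CommGroupWithZero G] (f : ℕ → G)
    {n : ℕ} (hf : ∀ i < n, f i ≠ 0) :
    (∏ i ∈ Finset.range n, f (i + 1) / f i) * f 0 = f n := by
  induction n with
  | zero => simp
  | succ n ih =>
    rw [Finset.prod_range_succ, mul_right_comm, ih fun i hi => hf i (by omega),
      mul_div_cancel₀ _ (hf n n.lt_succ_self)]

section suffList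

variable {k : Type*} (a : ℕ → k)

theorem suffList_cons {i n : ℕ} (h : i ≤ n) :
    suffList a i n = a i :: suffList a (i + 1) n := by
  rw [suffList, suffList, show n + 1 - i = (n - i) + 1 by omega,
    show n + 1 - (i + 1) = n - i by omega, List.range_succ_eq_map, List.map_cons,
    List.map_map]
  congr 1
  exact List.map_congr_left fun j _ => congrArg a (by omega)

theorem suffList_succ_self (n : ℕ) : suffList a (n + 1) n = [] := by
  simp [suffList]

end suffList

theorem cfPQ_fst_suffList {k : Type*} [DivisionRing k] (a : ℕ → k) {i n : ℕ} (h : i ≤ n) :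
    (cfPQ (suffList a i n)).1 = (cfPQ (suffList a (i + 1) n)).2 := by
  rw [suffList_cons a h, cfPQ]

theorem cf_product_is_Q_general {k : Type*} [NormedDivisionRing k]
    (n : ℕ) (a : ℕ → k)
    (hQ : ∀ i, 1 ≤ i → i ≤ n → (cfPQ (suffList a i n)).2 ≠ 0) :
    (∏ i ∈ Finset.range n,
        ‖(cfPQ (suffList a (i + 1) n)).1 * ((cfPQ (suffList a (i + 1) n)).2)⁻¹‖)
      = ‖(cfPQ (suffList a 1 n)).2‖⁻¹ := by
  set q : ℕ → ℝ := fun i => ‖(cfPQ (suffList a (i + 1) n)).2‖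
  have hq : ∀ i < n, q i ≠ 0 := fun i hi => norm_ne_zero_iff.mpr (hQ (i + 1) (by omega) hi)
  have hqn : q n = 1 := by simp [q, suffList_succ_self, cfPQ]
  have factor : ∀ i ∈ Finset.range n,
      ‖(cfPQ (suffList a (i + 1) n)).1 * ((cfPQ (suffList a (i + 1) n)).2)⁻¹‖
        = q (i + 1) / q i := fun i hi => by
    rw [norm_mul, norm_inv, ← div_eq_mul_inv,
      cfPQ_fst_suffList a (Finset.mem_range.mp hi)]
  rw [Finset.prod_congr rfl factor]
  exact eq_inv_of_mul_eq_one_left (hqn ▸ Finset.prod_range_div_mul_of_ne_zero q hq)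

/-- Lemma 2.3 (productisQ) of the paper: the product of the norms of the tail
convergents telescopes to `‖Q[a_1,…,a_n]‖⁻¹`. -/
theorem cf_product_is_Q {k : Type*} [NormedDivisionRing k]
    (n : ℕ) (hn : 1 ≤ n) (a : ℕ → k)
    (hQ : ∀ i, 1 ≤ i → i ≤ n → (cfPQ (suffList a i n)).2 ≠ 0) :
    (∏ i ∈ Finset.range n,
        ‖(cfPQ (suffList a (i + 1) n)).1 * ((cfPQ (suffList a (i + 1) n)).2)⁻¹‖)
      = ‖(cfPQ (suffList a 1 n)).2‖⁻¹ :=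
  cf_product_is_Q_general n a hQ
end

section
/- Let k be a normed division ring, n ≥ 1, and a_1,…,a_n ∈ k; define P and Q on suffixes by P[] = 0, Q[] = 1, P[a_i,…,a_n] = Q[a_{i+1},…,a_n], Q[a_i,…,a_n] = a_i·Q[a_{i+1},…,a_n] + P[a_{i+1},…,a_n], and suppose Q[a_i,…,a_n] ≠ 0 for every 1 ≤ i ≤ n. Let x₀ ∈ k with forward orbit x_0 = x₀, x_{i+1} = (x_i)⁻¹ − a_{i+1}, and assume x_i ≠ 0 for 0 ≤ i ≤ n−1. Then ‖P[a_1,…,a_n]·(Q[a_1,…,a_n])⁻¹ − x₀‖ = (∏_{i=0}^{n} ‖x_i‖)/‖Q[a_1,…,a_n]‖. -/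
theorem length_suffList {α : Type*} (a : ℕ → α) (i n : ℕ) :
    (suffList a i n).length = n + 1 - i := by
  simp [suffList]

theorem getElem_suffList {α : Type*} (a : ℕ → α) (i n j : ℕ) (hj : j < (suffList a i n).length) :
    (suffList a i n)[j] = a (i + j) := by
  simp [suffList]

section DivisionRing

variable {k : Type*} [DivisionRing k]

theorem cfPQ_cons_fst_sub_mul_snd (a : k) (l : List k) {x : k} (hx : x ≠ 0) :
    (cfPQ (a :: l)).1 - x * (cfPQ (a :: l)).2
      = -x * ((cfPQ l).1 - (x⁻¹ - a) * (cfPQ l).2) := by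
  simp only [cfPQ, neg_mul, mul_sub, sub_mul, ← mul_assoc, mul_inv_cancel₀ hx, one_mul, mul_add]
  abel

end DivisionRing

section NormedDivisionRing

variable {k : Type*} [NormedDivisionRing k]

theorem norm_cfPQ_fst_sub_mul_snd (l : List k) (x : ℕ → k)
    (hstep : ∀ i (hi : i < l.length), x (i + 1) = (x i)⁻¹ - l[i])
    (hx : ∀ i < l.length, x i ≠ 0) :
    ‖(cfPQ l).1 - x 0 * (cfPQ l).2‖ = ∏ i ∈ Finset.range (l.length + 1), ‖x i‖ := by
  induction l generalizing x with
  | nil => simp [cfPQ]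
  | cons a l ih =>
    have htail : ‖(cfPQ l).1 - x 1 * (cfPQ l).2‖
        = ∏ i ∈ Finset.range (l.length + 1), ‖x (i + 1)‖ :=
      ih (fun i => x (i + 1)) (fun i hi => hstep (i + 1) (by simpa using hi))
        (fun i hi => hx (i + 1) (by simpa using hi))
    have hx1 : x 1 = (x 0)⁻¹ - a := hstep 0 (by simp)
    rw [cfPQ_cons_fst_sub_mul_snd a l (hx 0 (by simp)), ← hx1, norm_mul, norm_neg, htail,
      List.length_cons, Finset.prod_range_succ' _ (l.length + 1), mul_comm]

theorem norm_mul_inv_sub_eq_div {p q : k} (hq : q ≠ 0) (x : k) :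
    ‖p * q⁻¹ - x‖ = ‖p - x * q‖ / ‖q‖ := by
  rw [div_eq_mul_inv, ← norm_inv, ← norm_mul, sub_mul, mul_inv_cancel_right₀ hq]

end NormedDivisionRing

/-- Corollary 2.4 (pqproduct) of the paper: the approximation error of the
`n`-th convergent equals `∏_{i=0}^{n} ‖x_i‖ / ‖Q_n‖`. -/
theorem cf_pq_product {k : Type*} [NormedDivisionRing k]
    (n : ℕ) (hn : 1 ≤ n) (a : ℕ → k)
    (hQ : ∀ i, 1 ≤ i → i ≤ n → (cfPQ (suffList a i n)).2 ≠ 0)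
    (x₀ : k) (x : ℕ → k) (hx0 : x 0 = x₀)
    (hstep : ∀ i, x (i + 1) = (x i)⁻¹ - a (i + 1))
    (hxne : ∀ i < n, x i ≠ 0) :
    ‖(cfPQ (suffList a 1 n)).1 * ((cfPQ (suffList a 1 n)).2)⁻¹ - x₀‖
      = (∏ i ∈ Finset.range (n + 1), ‖x i‖) / ‖(cfPQ (suffList a 1 n)).2‖ := by
  have hlen : (suffList a 1 n).length = n := by rw [length_suffList, Nat.add_sub_cancel]
  have herror := norm_cfPQ_fst_sub_mul_snd (suffList a 1 n) x
    (fun i _ => by rw [hstep, getElem_suffList, add_comm 1 i])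
    (fun i hi => hxne i (hlen ▸ hi))
  rw [norm_mul_inv_sub_eq_div (hQ 1 le_rfl hn), ← hx0, herror, hlen]
end
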